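/- arXiv:math/9311209 — 2 statements merged into one kernel-verified Lean document; each statement's English description precedes it below -/
import Mathlib

section
/- Let f be continuous on ℝ with convergent integral ∫_{-∞}^∞ f(x)dx, and suppose the bilateral series ∑_{n=-∞}^∞ f(x+n) converges uniformly for x ∈ [0,1]. Then ∫_{-∞}^∞ f(x) dx = ∫_0^1 ∑_{n=-∞}^∞ f(x+n) dx. -/
/-!
Cutting `ℝ` into the unit intervals `[n, n + 1]` gives `∫ f = ∑ₙ ∫₀¹ f (x + n) dx`. The partial
sums of this series are the integrals over `[0, 1]` of the partial sums of `∑ₙ f (x + n)`, and a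
uniform limit of integrable functions on a bounded interval may be integrated termwise: the
limit is dominated by `‖F i₀‖ + 1` for a single late enough partial sum `F i₀`.
-/

open MeasureTheory Filter Topology Set
open scoped Interval

theorem TendstoUniformlyOn.tendsto_intervalIntegral {ι E : Type*} [NormedAddCommGroup E]
    [NormedSpace ℝ E] {a b : ℝ} {μ : Measure ℝ} [IsLocallyFiniteMeasure μ] {l : Filter ι}
    [l.IsCountablyGenerated] {F : ι → ℝ → E} {f : ℝ → E}
    (hF : ∀ᶠ i in l, IntervalIntegrable (F i) μ a b) (h_lim : TendstoUniformlyOn F f l (Ι a b)) :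
    Tendsto (fun i => ∫ x in a..b, F i x ∂μ) l (𝓝 <| ∫ x in a..b, f x ∂μ) := by
  rcases l.eq_or_neBot with rfl | hl
  · simp
  have h_close := hF.and (Metric.tendstoUniformlyOn_iff.1 h_lim (1 / 2) one_half_pos)
  obtain ⟨i₀, hi₀, hi₀_close⟩ := h_close.exists
  apply intervalIntegral.tendsto_integral_filter_of_dominated_convergence (fun x => ‖F i₀ x‖ + 1)
  case hF_meas => exact hF.mono fun i hi => hi.def'.aestronglyMeasurable
  case h_bound =>
    refine h_close.mono fun i ⟨_, hi⟩ => .of_forall fun x hx => ?_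
    have := dist_triangle_left (F i x) (F i₀ x) (f x)
    linarith [hi x hx, hi₀_close x hx, norm_le_norm_add_norm_sub' (F i x) (F i₀ x),
      dist_eq_norm (F i x) (F i₀ x)]
  case bound_integrable => exact hi₀.norm.add intervalIntegrable_const
  case h_lim => exact .of_forall fun x hx => h_lim.tendsto_at hx

theorem integral_eq_integral_bilateral_tsum_translates_general (f : ℝ → ℂ)
    (hi : Integrable f)
    (hu : TendstoUniformlyOn (fun (s : Finset ℤ) x => ∑ n ∈ s, f (x + n))
      (fun x => ∑' n : ℤ, f (x + n)) atTop (Set.Icc 0 1)) :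
    ∫ x, f x = ∫ x in (0:ℝ)..1, ∑' n : ℤ, f (x + n) := by
  have h_translate (n : ℤ) : IntervalIntegrable (fun x => f (x + n)) volume 0 1 :=
    (hi.comp_add_right n).intervalIntegrable
  have h_partial : Tendsto (fun s : Finset ℤ => ∑ n ∈ s, ∫ x in (0:ℝ)..1, f (x + n)) atTop
      (𝓝 (∫ x in (0:ℝ)..1, ∑' n : ℤ, f (x + n))) := by
    simp_rw [← intervalIntegral.integral_finsetSum fun n _ => h_translate n]
    refine (hu.mono ?_).tendsto_intervalIntegral (.of_forall fun s => ?_)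
    · rw [uIoc_of_le zero_le_one]
      exact Ioc_subset_Icc_self
    · simpa only [← Finset.sum_fn] using IntervalIntegrable.sum s fun n _ => h_translate n
  exact hi.hasSum_intervalIntegral_comp_add_int.unique h_partial

/-- If `f` is continuous and integrable on `ℝ`, and the bilateral series of integer
translates `∑_{n=-∞}^∞ f(x+n)` converges uniformly on `[0,1]`, then
`∫_{-∞}^∞ f = ∫_0^1 ∑_{n=-∞}^∞ f(x+n) dx`. -/
theorem integral_eq_integral_bilateral_tsum_translates (f : ℝ → ℂ)
    (hc : Continuous f) (hi : Integrable f)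
    (hu : TendstoUniformlyOn (fun (s : Finset ℤ) x => ∑ n ∈ s, f (x + n))
      (fun x => ∑' n : ℤ, f (x + n)) atTop (Set.Icc 0 1)) :
    ∫ x, f x = ∫ x in (0:ℝ)..1, ∑' n : ℤ, f (x + n) :=
  integral_eq_integral_bilateral_tsum_translates_general f hi hu
end

section
/- (q-Gauss sum) For 0 < |q| < 1 and |c/(ab)| < 1, ∑_{n=0}^∞ (a;q)_n (b;q)_n / ((q;q)_n (c;q)_n) · (c/(ab))^n = (c/a, c/b; q)_∞ / (c, c/(ab); q)_∞. -/
/-- The infinite q-Pochhammer symbol `(a;q)_∞ = ∏_{n=0}^∞ (1 - a qⁿ)`. -/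
noncomputable def qp (a q : ℂ) : ℂ := ∏' n : ℕ, (1 - a * q ^ n)

/-!
Write `S(c)` for the sum. Each term satisfies a rational identity which, summed over `n`, turns
into the contiguous relation `(1 - c)(1 - c/(ab)) S(c) = (1 - c/a)(1 - c/b) S(cq)` once a
telescoping remainder drops out. Iterating it `N` times expresses `S(c)` through finite
q-Pochhammer products and `S(cqᴺ)`. As `N → ∞` the products converge to the infinite ones, and
`S(cqᴺ) → S(0) = 1` by dominated convergence, the terms being uniformly `O(|c/(ab)|ⁿ)`.
-/

open Finset Filter Topology

namespace QGauss

noncomputable def qPoch (x q : ℂ) (n : ℕ) : ℂ := ∏ k ∈ range n, (1 - x * q ^ k)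

variable {q a b x : ℂ}

lemma qPoch_succ (x q : ℂ) (n : ℕ) : qPoch x q (n + 1) = qPoch x q n * (1 - x * q ^ n) :=
  prod_range_succ _ _

lemma qPoch_succ' (x q : ℂ) (n : ℕ) : qPoch x q (n + 1) = (1 - x) * qPoch (x * q) q n := by
  simp only [qPoch, prod_range_succ', pow_zero, mul_one, mul_assoc, ← pow_succ']
  ring

lemma qPoch_add (x q : ℂ) (m n : ℕ) : qPoch x q (m + n) = qPoch x q m * qPoch (x * q ^ m) q n := by
  simp only [qPoch, prod_range_add, pow_add, mul_assoc]

lemma qPoch_ne_zero (hx : ∀ k : ℕ, x * q ^ k ≠ 1) (n : ℕ) : qPoch x q n ≠ 0 :=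
  prod_ne_zero_iff.2 fun k _ => sub_ne_zero.2 (hx k).symm

lemma mul_pow_ne_one (hx : ‖x‖ < 1) (hq : ‖q‖ ≤ 1) (k : ℕ) : x * q ^ k ≠ 1 := by
  intro h
  have : ‖x * q ^ k‖ < 1 := by
    rw [norm_mul, norm_pow]
    exact mul_lt_one_of_nonneg_of_lt_one_left (norm_nonneg x) hx (pow_le_one₀ (norm_nonneg q) hq)
  simp [h] at this

lemma exists_norm_le_of_tendsto {E : Type*} [SeminormedAddCommGroup E] {u : ℕ → E} {l : E}
    (h : Tendsto u atTop (𝓝 l)) : ∃ C, ∀ n, ‖u n‖ ≤ C :=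
  (isBounded_iff_forall_norm_le.1 (Metric.isBounded_range_of_tendsto u h)).imp
    fun _ hC n => hC _ (Set.mem_range_self n)

lemma summable_norm_mul_pow (hq : ‖q‖ < 1) (x : ℂ) : Summable fun n : ℕ => ‖x * q ^ n‖ := by
  simpa [norm_mul, norm_pow] using (summable_geometric_of_lt_one (norm_nonneg q) hq).mul_left ‖x‖

lemma tendsto_qPoch (hq : ‖q‖ < 1) (x : ℂ) : Tendsto (qPoch x q) atTop (𝓝 (qp x q)) := by
  have h := (multipliable_one_add_of_summable (f := fun n => -(x * q ^ n))
    (by simpa only [norm_neg] using summable_norm_mul_pow hq x)).hasProd.tendsto_prod_nat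
  simp only [← sub_eq_add_neg] at h
  exact h

lemma qp_ne_zero (hq : ‖q‖ < 1) (hx : ∀ k : ℕ, x * q ^ k ≠ 1) : qp x q ≠ 0 := by
  simpa only [qp, ← sub_eq_add_neg] using tprod_one_add_ne_zero_of_summable
    (f := fun n => -(x * q ^ n))
    (fun k => by rw [← sub_eq_add_neg]; exact sub_ne_zero.2 (hx k).symm)
    (by simpa only [norm_neg] using summable_norm_mul_pow hq x)

lemma exists_norm_qPoch_le (hq : ‖q‖ < 1) (x : ℂ) : ∃ C, ∀ n, ‖qPoch x q n‖ ≤ C :=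
  exists_norm_le_of_tendsto (tendsto_qPoch hq x)

lemma exists_norm_inv_qPoch_le (hq : ‖q‖ < 1) (hx : ∀ k : ℕ, x * q ^ k ≠ 1) :
    ∃ C, ∀ n, ‖(qPoch x q n)⁻¹‖ ≤ C :=
  exists_norm_le_of_tendsto ((tendsto_qPoch hq x).inv₀ (qp_ne_zero hq hx))

noncomputable def gaussTerm (q a b x : ℂ) (n : ℕ) : ℂ :=
  qPoch a q n * qPoch b q n / (qPoch q q n * qPoch x q n) * (x / (a * b)) ^ n

lemma exists_norm_gaussTerm_le (hq : ‖q‖ < 1) (a b : ℂ) :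
    ∃ C, 0 ≤ C ∧ ∀ x n, ‖gaussTerm q a b x n‖ ≤ C * ‖x / (a * b)‖ ^ n / ‖qPoch x q n‖ := by
  obtain ⟨A, hA⟩ := exists_norm_qPoch_le hq a
  obtain ⟨B, hB⟩ := exists_norm_qPoch_le hq b
  obtain ⟨D, hD⟩ := exists_norm_inv_qPoch_le hq (mul_pow_ne_one hq hq.le)
  have hA0 : 0 ≤ A := (norm_nonneg _).trans (hA 0)
  have hB0 : 0 ≤ B := (norm_nonneg _).trans (hB 0)
  have hD0 : 0 ≤ D := (norm_nonneg _).trans (hD 0)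
  refine ⟨A * B * D, by positivity, fun x n => ?_⟩
  calc ‖gaussTerm q a b x n‖
      = ‖qPoch a q n‖ * ‖qPoch b q n‖ * ‖(qPoch q q n)⁻¹‖ * ‖x / (a * b)‖ ^ n / ‖qPoch x q n‖ := by
        simp only [gaussTerm, norm_mul, norm_div, norm_inv, norm_pow]
        ring
    _ ≤ A * B * D * ‖x / (a * b)‖ ^ n / ‖qPoch x q n‖ := by
        gcongr
        exacts [hA n, hB n, hD n]

lemma summable_norm_gaussTerm (hq : ‖q‖ < 1) (hx : ∀ k : ℕ, x * q ^ k ≠ 1)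
    (hz : ‖x / (a * b)‖ < 1) : Summable fun n => ‖gaussTerm q a b x n‖ := by
  obtain ⟨C, hC0, hC⟩ := exists_norm_gaussTerm_le hq a b
  obtain ⟨D, hD⟩ := exists_norm_inv_qPoch_le hq hx
  refine .of_nonneg_of_le (fun n => norm_nonneg _) (fun n => (hC x n).trans ?_)
    ((summable_geometric_of_lt_one (norm_nonneg _) hz).mul_left (C * D))
  rw [div_eq_mul_inv, ← norm_inv, mul_right_comm, mul_assoc C, mul_assoc C]
  gcongr
  exact hD n

lemma gaussTerm_succ (q a b x : ℂ) (n : ℕ) :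
    gaussTerm q a b x (n + 1) = gaussTerm q a b x n * (x / (a * b) *
      ((1 - a * q ^ n) * (1 - b * q ^ n)) / ((1 - q ^ (n + 1)) * (1 - x * q ^ n))) := by
  simp only [gaussTerm, qPoch_succ, div_eq_mul_inv, mul_inv]
  ring

lemma gaussTerm_mul_q (hx : x ≠ 1) (n : ℕ) :
    gaussTerm q a b (x * q) n = gaussTerm q a b x n * ((1 - x) * q ^ n / (1 - x * q ^ n)) := by
  have h : qPoch (x * q) q n = qPoch x q n * (1 - x * q ^ n) / (1 - x) := by
    rw [← qPoch_succ, qPoch_succ', mul_div_cancel_left₀ _ (sub_ne_zero.2 hx.symm)]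
  simp only [gaussTerm, h, div_eq_mul_inv, mul_inv, inv_inv]
  ring

lemma gaussTerm_contiguous (ha : a ≠ 0) (hb : b ≠ 0) (hqq : ∀ k : ℕ, q * q ^ k ≠ 1)
    (hx : ∀ k : ℕ, x * q ^ k ≠ 1) (n : ℕ) :
    (1 - x) * (1 - x / (a * b)) * gaussTerm q a b x n =
      (1 - x / a) * (1 - x / b) * gaussTerm q a b (x * q) n +
        (1 - x) * (gaussTerm q a b x n * (1 - q ^ n) -
          gaussTerm q a b x (n + 1) * (1 - q ^ (n + 1))) := by
  have hr : 1 - x * q ^ n ≠ 0 := sub_ne_zero.2 (hx n).symm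
  have hs : 1 - q ^ (n + 1) ≠ 0 := sub_ne_zero.2 (by simpa [pow_succ'] using (hqq n).symm)
  rw [gaussTerm_mul_q (by simpa using hx 0), gaussTerm_succ]
  field_simp
  ring

lemma tsum_sub_succ {E : Type*} [NormedAddCommGroup E] [CompleteSpace E] {u : ℕ → E}
    (hu : Summable u) : ∑' n, (u n - u (n + 1)) = u 0 := by
  rw [hu.tsum_sub ((summable_nat_add_iff 1).2 hu), hu.tsum_eq_zero_add, add_sub_cancel_right]

lemma norm_mul_pow_div_lt_one (hq : ‖q‖ < 1) (hz : ‖x / (a * b)‖ < 1) (N : ℕ) :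
    ‖x * q ^ N / (a * b)‖ < 1 := by
  rw [mul_div_right_comm, norm_mul, norm_pow]
  exact mul_lt_one_of_nonneg_of_lt_one_left (norm_nonneg _) hz (pow_le_one₀ (norm_nonneg q) hq.le)

lemma tsum_gaussTerm_shift (hq : ‖q‖ < 1) (ha : a ≠ 0) (hb : b ≠ 0)
    (hx : ∀ k : ℕ, x * q ^ k ≠ 1) (hz : ‖x / (a * b)‖ < 1) :
    (1 - x) * (1 - x / (a * b)) * ∑' n, gaussTerm q a b x n =
      (1 - x / a) * (1 - x / b) * ∑' n, gaussTerm q a b (x * q) n := by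
  have hxq : ∀ k : ℕ, x * q * q ^ k ≠ 1 := fun k => by simpa [pow_succ', mul_assoc] using hx (k + 1)
  have hzq : ‖x * q / (a * b)‖ < 1 := by simpa using norm_mul_pow_div_lt_one hq hz 1
  have hT := summable_norm_gaussTerm hq hx hz
  have hTq := (summable_norm_gaussTerm hq hxq hzq).of_norm
  set u : ℕ → ℂ := fun n => gaussTerm q a b x n * (1 - q ^ n)
  have hu : Summable u := .of_norm_bounded (hT.mul_left 2) fun n => by
    rw [norm_mul, mul_comm]
    gcongr
    calc ‖1 - q ^ n‖ ≤ ‖(1 : ℂ)‖ + ‖q‖ ^ n := by rw [← norm_pow]; exact norm_sub_le _ _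
      _ ≤ 2 := by rw [norm_one]; linarith [pow_le_one₀ (norm_nonneg q) hq.le (n := n)]
  calc (1 - x) * (1 - x / (a * b)) * ∑' n, gaussTerm q a b x n
      = ∑' n, ((1 - x / a) * (1 - x / b) * gaussTerm q a b (x * q) n +
          (1 - x) * (u n - u (n + 1))) := by
        rw [← tsum_mul_left]
        exact tsum_congr (gaussTerm_contiguous ha hb (mul_pow_ne_one hq hq.le) hx)
    _ = (1 - x / a) * (1 - x / b) * ∑' n, gaussTerm q a b (x * q) n + (1 - x) * u 0 := by
        rw [(hTq.mul_left _).tsum_add ((hu.sub ((summable_nat_add_iff 1).2 hu)).mul_left _),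
          tsum_mul_left, tsum_mul_left, tsum_sub_succ hu]
    _ = (1 - x / a) * (1 - x / b) * ∑' n, gaussTerm q a b (x * q) n := by simp [u]

lemma qPoch_mul_tsum_gaussTerm (hq : ‖q‖ < 1) (ha : a ≠ 0) (hb : b ≠ 0) {c : ℂ}
    (hc : ∀ k : ℕ, c * q ^ k ≠ 1) (hz : ‖c / (a * b)‖ < 1) (N : ℕ) :
    qPoch c q N * qPoch (c / (a * b)) q N * ∑' n, gaussTerm q a b c n =
      qPoch (c / a) q N * qPoch (c / b) q N * ∑' n, gaussTerm q a b (c * q ^ N) n := by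
  induction N with
  | zero => simp [qPoch]
  | succ N ih =>
    have hcN : ∀ k : ℕ, c * q ^ N * q ^ k ≠ 1 := fun k => by rw [mul_assoc, ← pow_add]; exact hc _
    have hstep := tsum_gaussTerm_shift hq ha hb hcN (norm_mul_pow_div_lt_one hq hz N)
    rw [pow_succ, ← mul_assoc, qPoch_succ, qPoch_succ, qPoch_succ, qPoch_succ]
    linear_combination (1 - c * q ^ N) * (1 - c / (a * b) * q ^ N) * ih +
      qPoch (c / a) q N * qPoch (c / b) q N * hstep

lemma continuous_qPoch (q : ℂ) (n : ℕ) : Continuous fun x => qPoch x q n :=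
  continuous_finsetProd _ fun _ _ => by fun_prop

lemma tsum_gaussTerm_zero (q a b : ℂ) : ∑' n, gaussTerm q a b 0 n = 1 := by
  rw [tsum_eq_single 0 fun n hn => by simp [gaussTerm, hn]]
  simp [gaussTerm, qPoch]

lemma tendsto_tsum_gaussTerm_mul_pow (hq : ‖q‖ < 1) {c : ℂ} (hc : ∀ k : ℕ, c * q ^ k ≠ 1)
    (hz : ‖c / (a * b)‖ < 1) :
    Tendsto (fun N => ∑' n, gaussTerm q a b (c * q ^ N) n) atTop (𝓝 1) := by
  obtain ⟨C, hC0, hC⟩ := exists_norm_gaussTerm_le hq a b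
  obtain ⟨A, hA⟩ := exists_norm_qPoch_le hq c
  obtain ⟨B, hB⟩ := exists_norm_inv_qPoch_le hq hc
  have hA0 : 0 ≤ A := (norm_nonneg _).trans (hA 0)
  have hB0 : 0 ≤ B := (norm_nonneg _).trans (hB 0)
  rw [← tsum_gaussTerm_zero q a b]
  refine tendsto_tsum_of_dominated_convergence (bound := fun n => C * A * B * ‖c / (a * b)‖ ^ n)
    ((summable_geometric_of_lt_one (norm_nonneg _) hz).mul_left _) (fun n => ?_)
    (.of_forall fun N n => ?_)
  · have hcont : ContinuousAt (fun x => gaussTerm q a b x n) 0 := by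
      have hden : qPoch q q n * qPoch 0 q n ≠ 0 := by
        simpa [qPoch] using qPoch_ne_zero (mul_pow_ne_one hq hq.le) n
      exact (continuousAt_const.div (continuousAt_const.mul (continuous_qPoch q n).continuousAt)
        hden).mul ((continuousAt_id.div_const _).pow n)
    have hlim : Tendsto (fun N => c * q ^ N) atTop (𝓝 0) := by
      simpa using (tendsto_pow_atTop_nhds_zero_of_norm_lt_one hq).const_mul c
    exact hcont.tendsto.comp hlim
  · have hinv : (qPoch (c * q ^ N) q n)⁻¹ = qPoch c q N * (qPoch c q (N + n))⁻¹ := by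
      rw [qPoch_add, mul_inv, mul_inv_cancel_left₀ (qPoch_ne_zero hc N)]
    calc ‖gaussTerm q a b (c * q ^ N) n‖
        ≤ C * ‖c * q ^ N / (a * b)‖ ^ n * ‖(qPoch (c * q ^ N) q n)⁻¹‖ := by
          rw [norm_inv, ← div_eq_mul_inv]; exact hC _ n
      _ ≤ C * ‖c / (a * b)‖ ^ n * (A * B) := by
          rw [hinv, norm_mul]
          gcongr
          · rw [mul_div_right_comm, norm_mul, norm_pow]
            exact mul_le_of_le_one_right (norm_nonneg _) (pow_le_one₀ (norm_nonneg q) hq.le)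
          · exact hA N
          · exact hB _
      _ = C * A * B * ‖c / (a * b)‖ ^ n := by ring

end QGauss

open QGauss

theorem q_gauss_sum_general (q a b c : ℂ)
    (hq1 : ‖q‖ < 1)
    (ha : a ≠ 0) (hb : b ≠ 0)
    (hc : ∀ k : ℕ, c * q ^ k ≠ 1)
    (hz : ‖c / (a * b)‖ < 1) :
    ∑' n : ℕ,
      (∏ k ∈ Finset.range n, (1 - a * q ^ k)) * (∏ k ∈ Finset.range n, (1 - b * q ^ k)) /
        ((∏ k ∈ Finset.range n, (1 - q * q ^ k)) * (∏ k ∈ Finset.range n, (1 - c * q ^ k))) *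
        (c / (a * b)) ^ n =
      qp (c / a) q * qp (c / b) q / (qp c q * qp (c / (a * b)) q) := by
  change ∑' n, gaussTerm q a b c n = _
  have hlim : Tendsto (fun N => qPoch c q N * qPoch (c / (a * b)) q N * ∑' n, gaussTerm q a b c n)
      atTop (𝓝 (qp c q * qp (c / (a * b)) q * ∑' n, gaussTerm q a b c n)) :=
    ((tendsto_qPoch hq1 c).mul (tendsto_qPoch hq1 _)).mul_const _
  have hlim' : Tendsto (fun N => qPoch c q N * qPoch (c / (a * b)) q N * ∑' n, gaussTerm q a b c n)
      atTop (𝓝 (qp (c / a) q * qp (c / b) q * 1)) := by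
    simp_rw [qPoch_mul_tsum_gaussTerm hq1 ha hb hc hz]
    exact ((tendsto_qPoch hq1 _).mul (tendsto_qPoch hq1 _)).mul
      (tendsto_tsum_gaussTerm_mul_pow hq1 hc hz)
  have hden : qp c q * qp (c / (a * b)) q ≠ 0 :=
    mul_ne_zero (qp_ne_zero hq1 hc) (qp_ne_zero hq1 (mul_pow_ne_one hz hq1.le))
  rw [eq_div_iff hden, mul_comm, tendsto_nhds_unique hlim hlim', mul_one]

/-- The q-Gauss summation formula. -/
theorem q_gauss_sum (q a b c : ℂ)
    (hq0 : 0 < ‖q‖) (hq1 : ‖q‖ < 1)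
    (ha : a ≠ 0) (hb : b ≠ 0)
    (hc : ∀ k : ℕ, c * q ^ k ≠ 1)
    (hz : ‖c / (a * b)‖ < 1) :
    ∑' n : ℕ,
      (∏ k ∈ Finset.range n, (1 - a * q ^ k)) * (∏ k ∈ Finset.range n, (1 - b * q ^ k)) /
        ((∏ k ∈ Finset.range n, (1 - q * q ^ k)) * (∏ k ∈ Finset.range n, (1 - c * q ^ k))) *
        (c / (a * b)) ^ n =
      qp (c / a) q * qp (c / b) q / (qp c q * qp (c / (a * b)) q) :=
  q_gauss_sum_general q a b c hq1 ha hb hc hz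
end
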